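/- arXiv:1308.0877 — 7 statements merged into one kernel-verified Lean document; each statement's English description precedes it below -/
import Mathlib

section
/- Let v_1, …, v_d ∈ ℤ² be a unimodular sequence of primitive vectors, i.e. ε_i = det(v_i, v_{i+1}) ∈ {+1, −1} for all i = 1, …, d (indices mod d, so v_{d+1} = v_1 and v_0 = v_d), and let a_i = ε_{i-1}^{-1} ε_i^{-1} det(v_{i+1}, v_{i-1}). Then the rotation number of the sequence v_1, …, v_d around the origin equals (1/12) ∑_{i=1}^d (3ε_i + a_i). -/
/-- determinant of the 2×2 matrix with columns `v` and `w` -/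
def det2 (v w : Fin 2 → ℤ) : ℤ := v 0 * w 1 - v 1 * w 0

/-- a vector of `ℤ²` is primitive if its components are relatively prime -/
def Primitive (v : Fin 2 → ℤ) : Prop := Int.gcd (v 0) (v 1) = 1

/-- the signed angle from `v` to `w`, lying in `(-π, π]`; when `det2 v w ≠ 0` it lies in
`(-π, π)` and equals the line integral of `(-y dx + x dy)/(x² + y²)` along the segment
from `v` to `w`. -/
noncomputable def segAngle (v w : Fin 2 → ℤ) : ℝ :=
  Complex.arg (((w 0 : ℂ) + (w 1 : ℂ) * Complex.I) / ((v 0 : ℂ) + (v 1 : ℂ) * Complex.I))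

/-- the rotation number of the cyclic sequence `v 0, …, v (d-1)` around the origin -/
noncomputable def rotationNumber {d : ℕ} [NeZero d] (v : Fin d → Fin 2 → ℤ) : ℝ :=
  (1 / (2 * Real.pi)) * ∑ i : Fin d, segAngle (v i) (v (i + 1))

/-!
Write `θ(v, w)` for the signed angle from `v` to `w`, and for a unimodular pair put
`D(v, w) = θ(v, w) - (π/2) det(v, w) - (π/6) c(v, w)`, where `c(v, w)` collects the
contributions of the edge `(v, w)` to the numbers `a` at its two endpoints. `D` is antisymmetric,
vanishes on pairs of unit vectors, and sums to zero around every unimodular triangle: the angles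
of a triangle add up to `2πk`, and `k` is pinned down by the signs of the three determinants.
Every primitive `w` of `ℓ¹`-norm at least two is the sum of two unimodular vectors in its
quadrant (a Farey parent and its complement), and every other short unimodular neighbour of `w`
closes a triangle with these, so descent on the `ℓ¹`-norm gives a potential `G` with
`D(v, w) = G(w) - G(v)`. Hence `D` sums to zero around the cycle, and as the edge contributions
regroup into `∑ aᵢ`, the total angle is `(π/6) ∑ (3εᵢ + aᵢ)`.
-/

namespace UnimodularSequence

open Complex Real

lemma det2_swap (v w : Fin 2 → ℤ) : det2 w v = -det2 v w := by
  unfold det2; ring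

@[simp] lemma det2_self (v : Fin 2 → ℤ) : det2 v v = 0 := by
  unfold det2; ring

@[simp] lemma det2_neg_left (v w : Fin 2 → ℤ) : det2 (-v) w = -det2 v w := by
  simp only [det2, Pi.neg_apply]; ring

@[simp] lemma det2_neg_right (v w : Fin 2 → ℤ) : det2 v (-w) = -det2 v w := by
  simp only [det2, Pi.neg_apply]; ring

@[simp] lemma det2_sub_left (u v w : Fin 2 → ℤ) : det2 (u - v) w = det2 u w - det2 v w := by
  simp only [det2, Pi.sub_apply]; ring

@[simp] lemma det2_sub_right (u v w : Fin 2 → ℤ) : det2 u (v - w) = det2 u v - det2 u w := by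
  simp only [det2, Pi.sub_apply]; ring

lemma isUnit_det2_swap {v w : Fin 2 → ℤ} (h : IsUnit (det2 v w)) : IsUnit (det2 w v) := by
  rw [det2_swap]; exact h.neg

lemma ne_zero_of_isUnit_det2 {v w : Fin 2 → ℤ} (h : IsUnit (det2 v w)) : w ≠ 0 := by
  rintro rfl
  simp [det2] at h

lemma isCoprime_of_isUnit_det2 {u w : Fin 2 → ℤ} (h : IsUnit (det2 u w)) :
    IsCoprime (w 0) (w 1) := by
  obtain ⟨e, he⟩ := h
  refine ⟨-(↑e⁻¹ * u 1), ↑e⁻¹ * u 0, ?_⟩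
  have : (↑e⁻¹ : ℤ) * det2 u w = 1 := by rw [← he, Units.inv_mul]
  unfold det2 at this
  linear_combination this

lemma exists_eq_smul_of_det2_eq_zero {z w : Fin 2 → ℤ} (hw : IsCoprime (w 0) (w 1))
    (h : det2 z w = 0) : ∃ k : ℤ, z = k • w := by
  obtain ⟨m, n, hmn⟩ := hw
  unfold det2 at h
  refine ⟨m * z 0 + n * z 1, funext fun i => ?_⟩
  fin_cases i
  · simp only [Fin.zero_eta, Fin.isValue, Pi.smul_apply, smul_eq_mul]
    linear_combination (-z 0) * hmn + n * h
  · simp only [Fin.mk_one, Fin.isValue, Pi.smul_apply, smul_eq_mul]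
    linear_combination (-z 1) * hmn - m * h

def norm1 (v : Fin 2 → ℤ) : ℤ := |v 0| + |v 1|

lemma norm1_nonneg (v : Fin 2 → ℤ) : 0 ≤ norm1 v := by
  unfold norm1; positivity

@[simp] lemma norm1_neg (v : Fin 2 → ℤ) : norm1 (-v) = norm1 v := by
  simp [norm1]

lemma norm1_pos {v : Fin 2 → ℤ} (hv : v ≠ 0) : 0 < norm1 v := by
  obtain ⟨i, hi⟩ := Function.ne_iff.mp hv
  have := abs_pos.mpr hi
  unfold norm1
  fin_cases i <;> simp at this <;> positivity

lemma norm1_smul_add_smul {x y : Fin 2 → ℤ} (hxy : ∀ i, 0 ≤ x i * y i) {a b : ℤ}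
    (hab : 0 ≤ a * b) : norm1 (a • x + b • y) = |a| * norm1 x + |b| * norm1 y := by
  have key : ∀ i, |a * x i + b * y i| = |a| * |x i| + |b| * |y i| := fun i => by
    rw [← abs_mul, ← abs_mul, abs_add_eq_add_abs_iff, ← mul_nonneg_iff]
    nlinarith [mul_nonneg hab (hxy i)]
  simp only [norm1, Pi.add_apply, Pi.smul_apply, smul_eq_mul, key]
  ring

lemma eq_zero_or_eq_zero_of_abs_mul_add_abs_mul_le {c k p q : ℤ}
    (hc : c - k = 1 ∨ c - k = -1) (hp : 0 < p) (hq : 0 < q)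
    (h : |c| * p + |k| * q ≤ p + q) : k = 0 ∨ c = 0 := by
  by_contra! hne
  have h3 : 3 ≤ |c| + |k| := by
    rcases hc with hc | hc <;> rcases abs_cases c with ⟨hc', _⟩ | ⟨hc', _⟩ <;>
      rcases abs_cases k with ⟨hk', _⟩ | ⟨hk', _⟩ <;> omega
  have h1 : 1 ≤ |c| := Int.one_le_abs hne.2
  have h2 : 1 ≤ |k| := Int.one_le_abs hne.1
  nlinarith

structure IsFareyParent (u w : Fin 2 → ℤ) : Prop where
  isUnit_det2 : IsUnit (det2 u w)
  ne_zero : u ≠ 0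
  ne : u ≠ w
  same_quadrant : ∀ i, 0 ≤ u i * (w - u) i

namespace IsFareyParent

variable {u w : Fin 2 → ℤ}

lemma norm1_add_norm1_sub (h : IsFareyParent u w) : norm1 u + norm1 (w - u) = norm1 w := by
  simpa using (norm1_smul_add_smul h.same_quadrant (a := 1) (b := 1) zero_le_one).symm

lemma norm1_lt (h : IsFareyParent u w) : norm1 u < norm1 w := by
  have := norm1_pos (sub_ne_zero.mpr h.ne.symm)
  linarith [h.norm1_add_norm1_sub]

lemma two_le_norm1 (h : IsFareyParent u w) : 2 ≤ norm1 w := by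
  have := norm1_pos (sub_ne_zero.mpr h.ne.symm)
  have := norm1_pos h.ne_zero
  linarith [h.norm1_add_norm1_sub]

lemma eq_of_isUnit_det2 (h : IsFareyParent u w) {v : Fin 2 → ℤ} (hv : IsUnit (det2 v w))
    (hvw : norm1 v ≤ norm1 w) : v = u ∨ v = -u ∨ v = w - u ∨ v = u - w := by
  obtain ⟨huw, hu, hu_ne, halign⟩ := h
  set σ := det2 v w * det2 u w with hσ_def
  have hσ : σ = 1 ∨ σ = -1 := Int.isUnit_iff.mp (hv.mul huw)
  obtain ⟨k, hk⟩ : ∃ k : ℤ, v - σ • u = k • w := by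
    refine exists_eq_smul_of_det2_eq_zero (isCoprime_of_isUnit_det2 huw) ?_
    have := Int.isUnit_mul_self huw
    simp only [det2, Pi.sub_apply, Pi.smul_apply, smul_eq_mul, hσ_def] at this ⊢
    linear_combination (-(v 0 * w 1 - v 1 * w 0)) * this
  have hv_eq : v = (σ + k) • u + k • (w - u) := by
    rw [sub_eq_iff_eq_add] at hk
    rw [hk]
    module
  have hprod : 0 ≤ (σ + k) * k := by
    rcases hσ with h | h <;> rw [h] <;> nlinarith [Int.le_self_sq k, Int.le_self_sq (-k)]
  have hnorm := norm1_smul_add_smul halign hprod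
  rw [← hv_eq] at hnorm
  have hsum := norm1_add_norm1_sub ⟨huw, hu, hu_ne, halign⟩
  have hk0 : k = 0 ∨ σ + k = 0 :=
    eq_zero_or_eq_zero_of_abs_mul_add_abs_mul_le (by rcases hσ with h | h <;> rw [h] <;> simp)
      (norm1_pos hu) (norm1_pos (sub_ne_zero.mpr hu_ne.symm)) (by linarith)
  rcases hk0 with hk0 | hk0 <;> rcases hσ with hσ | hσ
  · left; rw [hv_eq, hk0, hσ]; module
  · right; left; rw [hv_eq, hk0, hσ]; module
  · right; right; right; rw [hv_eq, hk0, show k = -1 by omega]; module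
  · right; right; left; rw [hv_eq, hk0, show k = 1 by omega]; module

end IsFareyParent

lemma exists_bezout_in_box {P Q : ℤ} (hP : 0 < P) (hQ : 0 < Q) (h : IsCoprime Q P) :
    ∃ a b : ℤ, 0 < a ∧ a ≤ P ∧ 0 ≤ b ∧ b < Q ∧ a * Q - b * P = 1 := by
  obtain ⟨m, n, hmn⟩ := h
  have hdiv := Int.emod_def (m - 1) P
  have hlo := Int.emod_nonneg (m - 1) hP.ne'
  have hhi := Int.emod_lt_of_pos (m - 1) hP
  have hab : ((m - 1) % P + 1) * Q - (-n - (m - 1) / P * Q) * P = 1 := by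
    linear_combination hmn + Q * hdiv
  refine ⟨(m - 1) % P + 1, -n - (m - 1) / P * Q, by omega, by omega, ?_, ?_, hab⟩
  · nlinarith
  · nlinarith

lemma ne_zero_and_ne_zero_of_isCoprime {w : Fin 2 → ℤ} (hw : IsCoprime (w 0) (w 1))
    (h2 : 2 ≤ norm1 w) : w 0 ≠ 0 ∧ w 1 ≠ 0 := by
  constructor <;> intro h0
  · rw [h0, isCoprime_zero_left, Int.isUnit_iff_abs_eq] at hw
    simp [norm1, h0, hw] at h2
  · rw [h0, isCoprime_zero_right, Int.isUnit_iff_abs_eq] at hw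
    simp [norm1, h0, hw] at h2

lemma exists_isFareyParent {w : Fin 2 → ℤ} (hw : IsCoprime (w 0) (w 1)) (h2 : 2 ≤ norm1 w) :
    ∃ u, IsFareyParent u w := by
  obtain ⟨hw0, hw1⟩ := ne_zero_and_ne_zero_of_isCoprime hw h2
  obtain ⟨a, b, ha, haP, hb, hbQ, hab⟩ :=
    exists_bezout_in_box (abs_pos.mpr hw0) (abs_pos.mpr hw1) hw.symm.abs_left.abs_right
  set s := (w 0).sign
  set t := (w 1).sign
  have hs : s * |w 0| = w 0 := Int.sign_mul_abs _
  have ht : t * |w 1| = w 1 := Int.sign_mul_abs _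
  have hs0 : s ≠ 0 := mt Int.sign_eq_zero_iff_zero.mp hw0
  have ht0 : t ≠ 0 := mt Int.sign_eq_zero_iff_zero.mp hw1
  refine ⟨![s * a, t * b], ?_, ?_, ?_, fun i => ?_⟩
  · have hdet : det2 ![s * a, t * b] w = s * t := by
      simp only [det2, Matrix.cons_val_zero, Matrix.cons_val_one]
      rw [← hs, ← ht]
      linear_combination s * t * hab
    rw [hdet, Int.isUnit_iff_natAbs_eq, Int.natAbs_mul, Int.natAbs_sign_of_ne_zero hw0,
      Int.natAbs_sign_of_ne_zero hw1]
  · intro h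
    have := congrFun h 0
    simp only [Matrix.cons_val_zero, Pi.zero_apply, mul_eq_zero] at this
    omega
  · intro h
    have := congrFun h 1
    simp only [Matrix.cons_val_one] at this
    rw [← ht] at this
    have := mul_left_cancel₀ ht0 this
    omega
  · fin_cases i
    · simp only [Fin.zero_eta, Pi.sub_apply, Matrix.cons_val_zero]
      rw [← hs]
      nlinarith [mul_nonneg (mul_self_nonneg s) (mul_nonneg ha.le (sub_nonneg.mpr haP))]
    · simp only [Fin.mk_one, Pi.sub_apply, Matrix.cons_val_one, Matrix.cons_val_fin_one]
      rw [← ht]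
      nlinarith [mul_nonneg (mul_self_nonneg t) (mul_nonneg hb (sub_nonneg.mpr hbQ.le))]

section Potential

variable {M : Type*} [AddCommGroup M]

structure IsFareyCocycle (f : (Fin 2 → ℤ) → (Fin 2 → ℤ) → M) : Prop where
  antisymm : ∀ v w, IsUnit (det2 v w) → f w v = -f v w
  triangle : ∀ x y z, IsUnit (det2 x y) → IsUnit (det2 y z) → IsUnit (det2 z x) →
    f x y + f y z + f z x = 0

open Classical in
noncomputable def fareyPotential (f : (Fin 2 → ℤ) → (Fin 2 → ℤ) → M) (w : Fin 2 → ℤ) : M :=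
  if h : ∃ u, IsFareyParent u w then fareyPotential f h.choose + f h.choose w else 0
termination_by (norm1 w).toNat
decreasing_by
  have := h.choose_spec.norm1_lt
  have := norm1_pos h.choose_spec.ne_zero
  omega

lemma fareyPotential_of_exists (f : (Fin 2 → ℤ) → (Fin 2 → ℤ) → M) {w : Fin 2 → ℤ}
    (h : ∃ u, IsFareyParent u w) :
    fareyPotential f w = fareyPotential f h.choose + f h.choose w := by
  rw [fareyPotential, dif_pos h]

lemma fareyPotential_eq_zero (f : (Fin 2 → ℤ) → (Fin 2 → ℤ) → M) {w : Fin 2 → ℤ}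
    (hw : norm1 w < 2) : fareyPotential f w = 0 := by
  rw [fareyPotential, dif_neg]
  rintro ⟨u, hu⟩
  exact hw.not_ge hu.two_le_norm1

lemma IsFareyCocycle.eq_sub_of_isFareyParent {f : (Fin 2 → ℤ) → (Fin 2 → ℤ) → M}
    (hf : IsFareyCocycle f) {G : (Fin 2 → ℤ) → M} {u w : Fin 2 → ℤ} (hu : IsFareyParent u w)
    (hGw : G w = G u + f u w)
    (ih : ∀ x y, norm1 x + norm1 y ≤ norm1 w → IsUnit (det2 x y) → f x y = G y - G x)
    {v : Fin 2 → ℤ} (hv : IsUnit (det2 v w)) (hvw : norm1 v ≤ norm1 w) :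
    f v w = G w - G v := by
  have hsum := hu.norm1_add_norm1_sub
  have huw : IsUnit (det2 u w) := hu.isUnit_det2
  have hwu : IsUnit (det2 w u) := isUnit_det2_swap hu.isUnit_det2
  have hfu : f u w = G w - G u := by rw [hGw]; abel
  have hfwu : f (w - u) w = G w - G (w - u) := by
    have h1 := hf.triangle (w - u) u w (by simp [hwu]) huw (by simp [hwu])
    have h2 := ih (w - u) u (by linarith) (by simp [hwu])
    have h3 := hf.antisymm (w - u) w (by simp [huw])
    linear_combination (norm := abel) h2 + hfu + h3 - h1
  rcases hu.eq_of_isUnit_det2 hv hvw with rfl | rfl | rfl | rfl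
  · exact hfu
  · have h1 := hf.triangle (-u) (w - u) w (by simp [huw]) (by simp [huw]) (by simp [hwu])
    have h2 := ih (-u) (w - u) (by rw [norm1_neg]; linarith) (by simp [huw])
    have h3 := hf.antisymm (-u) w (by simp [huw])
    linear_combination (norm := abel) h2 + hfwu + h3 - h1
  · exact hfwu
  · have h1 := hf.triangle (u - w) u w (by simp [hwu]) huw (by simp [hwu])
    have h2 := ih (u - w) u (by rw [← neg_sub, norm1_neg]; linarith) (by simp [hwu])
    have h3 := hf.antisymm (u - w) w (by simp [huw])
    linear_combination (norm := abel) h2 + hfu + h3 - h1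

theorem IsFareyCocycle.eq_fareyPotential_sub {f : (Fin 2 → ℤ) → (Fin 2 → ℤ) → M}
    (hf : IsFareyCocycle f)
    (base : ∀ v w, IsUnit (det2 v w) → norm1 v = 1 → norm1 w = 1 → f v w = 0)
    {v w : Fin 2 → ℤ} (h : IsUnit (det2 v w)) :
    f v w = fareyPotential f w - fareyPotential f v := by
  set G := fareyPotential f
  suffices ∀ n : ℕ, ∀ v w, (norm1 v + norm1 w).toNat ≤ n → IsUnit (det2 v w) →
      f v w = G w - G v from this _ v w le_rfl h
  clear h v w
  intro n
  induction n using Nat.strong_induction_on with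
  | _ n ih =>
  intro v w hn h
  wlog hvw : norm1 v ≤ norm1 w generalizing v w
  · rw [hf.antisymm w v (isUnit_det2_swap h),
      this w v (by omega) (isUnit_det2_swap h) (by omega)]
    abel
  have hv := norm1_pos (ne_zero_of_isUnit_det2 (isUnit_det2_swap h))
  by_cases h2 : 2 ≤ norm1 w
  · have hex := exists_isFareyParent (isCoprime_of_isUnit_det2 h) h2
    refine hf.eq_sub_of_isFareyParent hex.choose_spec (fareyPotential_of_exists f hex)
      (fun x y hxy => ih _ ?_ x y le_rfl) h hvw
    have := norm1_nonneg x
    have := norm1_nonneg y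
    omega
  · have hG : ∀ x, norm1 x < 2 → G x = 0 := fun x => fareyPotential_eq_zero f
    rw [base v w h (by omega) (by omega), hG w (by omega), hG v (by omega), sub_zero]

end Potential

lemma segAngle_eq_arg (v w : Fin 2 → ℤ) :
    segAngle v w = arg (((v ⬝ᵥ w : ℤ) : ℂ) + (det2 v w : ℂ) * I) := by
  set zv : ℂ := (v 0 : ℂ) + (v 1 : ℂ) * I
  set zw : ℂ := (w 0 : ℂ) + (w 1 : ℂ) * I
  have hprod : zw * (starRingEnd ℂ) zv = ((v ⬝ᵥ w : ℤ) : ℂ) + (det2 v w : ℂ) * I := by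
    apply Complex.ext <;> simp [zv, zw, det2, dotProduct, Fin.sum_univ_two] <;> ring
  change arg (zw / zv) = _
  rcases eq_or_ne zv 0 with hv | hv
  · rw [← hprod, hv, div_zero, map_zero, mul_zero]
  · rw [← hprod, div_eq_mul_inv, Complex.inv_def, ← mul_assoc]
    exact arg_mul_real (inv_pos.mpr (normSq_pos.mpr hv)) _

lemma segAngle_swap {v w : Fin 2 → ℤ} (h : det2 v w ≠ 0) : segAngle w v = -segAngle v w := by
  have hconj : ((w ⬝ᵥ v : ℤ) : ℂ) + (det2 w v : ℂ) * I
      = (starRingEnd ℂ) (((v ⬝ᵥ w : ℤ) : ℂ) + (det2 v w : ℂ) * I) := by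
    apply Complex.ext <;> simp [dotProduct_comm, det2_swap v w]
  rw [segAngle_eq_arg, segAngle_eq_arg, hconj, arg_conj, if_neg]
  simp [arg_eq_pi_iff, h]

lemma abs_segAngle_sub_lt {v w : Fin 2 → ℤ} (h : IsUnit (det2 v w)) :
    |segAngle v w - π / 2 * det2 v w| < π / 2 := by
  rw [segAngle_eq_arg, abs_sub_lt_iff]
  rcases Int.isUnit_iff.mp h with h1 | h1 <;> rw [h1] <;> push_cast
  · set z : ℂ := ((v ⬝ᵥ w : ℤ) : ℂ) + 1 * I
    have hpos : 0 < arg z := by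
      refine (arg_nonneg_iff.mpr (by simp [z])).lt_of_ne (Ne.symm ?_)
      rw [Ne, arg_eq_zero_iff]
      simp [z]
    have hlt : arg z < π := arg_lt_pi_iff.mpr (by simp [z])
    constructor <;> linarith
  · set z : ℂ := ((v ⬝ᵥ w : ℤ) : ℂ) + -1 * I
    have hneg : arg z < 0 := arg_neg_iff.mpr (by simp [z])
    have hgt := neg_pi_lt_arg z
    constructor <;> linarith

lemma segAngle_eq_of_dotProduct_eq_zero {v w : Fin 2 → ℤ} (h : IsUnit (det2 v w))
    (h0 : v ⬝ᵥ w = 0) : segAngle v w = π / 2 * det2 v w := by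
  rw [segAngle_eq_arg, h0]
  rcases Int.isUnit_iff.mp h with h1 | h1 <;> simp [h1, arg_I, arg_neg_I]

lemma exists_arg_div_add_arg_div_add_arg_div {a b c : ℂ} (ha : a ≠ 0) (hb : b ≠ 0)
    (hc : c ≠ 0) : ∃ k : ℤ, arg (b / a) + arg (c / b) + arg (a / c) = 2 * π * k := by
  have hab := div_ne_zero hb ha
  have hbc := div_ne_zero hc hb
  have hca := div_ne_zero ha hc
  have hangle : ((arg (b / a) + arg (c / b) + arg (a / c) : ℝ) : Real.Angle) = (0 : ℝ) := by
    rw [Real.Angle.coe_add, Real.Angle.coe_add, ← arg_mul_coe_angle hab hbc,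
      ← arg_mul_coe_angle (mul_ne_zero hab hbc) hca]
    field_simp
    simp
  obtain ⟨k, hk⟩ := Real.Angle.angle_eq_iff_two_pi_dvd_sub.mp hangle
  exact ⟨k, by linarith⟩

lemma exists_segAngle_add_segAngle_add_segAngle {x y z : Fin 2 → ℤ} (hx : x ≠ 0) (hy : y ≠ 0)
    (hz : z ≠ 0) : ∃ k : ℤ, segAngle x y + segAngle y z + segAngle z x = 2 * π * k := by
  have hc : ∀ {v : Fin 2 → ℤ}, v ≠ 0 → (v 0 : ℂ) + (v 1 : ℂ) * I ≠ 0 := by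
    intro v hv hcv
    have h0 : (v 0 : ℝ) = 0 := by simpa using congrArg re hcv
    have h1 : (v 1 : ℝ) = 0 := by simpa using congrArg im hcv
    refine hv (funext fun i => ?_)
    fin_cases i
    exacts [by exact_mod_cast h0, by exact_mod_cast h1]
  exact exists_arg_div_add_arg_div_add_arg_div (hc hx) (hc hy) (hc hz)

/-- Cramer's rule gives `ε_{i-1} v_{i-1} + ε_i v_{i+1} = -a_i v_i`; pairing it with `v_i` splits
`a_i` into one term for each edge at `v_i`: `a_i = cornerTerm v_{i+1} v_i - cornerTerm v_{i-1} v_i`.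
-/
noncomputable def cornerTerm (v w : Fin 2 → ℤ) : ℝ := det2 v w * (v ⬝ᵥ w : ℤ) / (w ⬝ᵥ w : ℤ)

lemma cornerTerm_sub_cornerTerm {x y z : Fin 2 → ℤ} (hxy : IsUnit (det2 x y))
    (hyz : IsUnit (det2 y z)) :
    cornerTerm z y - cornerTerm x y = ((det2 x y * det2 y z * det2 z x : ℤ) : ℝ) := by
  have hy : ((y ⬝ᵥ y : ℤ) : ℝ) ≠ 0 := by
    exact_mod_cast mt dotProduct_self_eq_zero.mp (ne_zero_of_isUnit_det2 hxy)
  have hint : det2 z y * (z ⬝ᵥ y) - det2 x y * (x ⬝ᵥ y)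
      = det2 x y * det2 y z * det2 z x * (y ⬝ᵥ y) := by
    linear_combination (norm := (simp only [det2, dotProduct, Fin.sum_univ_two]; ring))
      (det2 y z * (y ⬝ᵥ z)) * Int.isUnit_mul_self hxy
      + (det2 x y * (x ⬝ᵥ y)) * Int.isUnit_mul_self hyz
  rw [cornerTerm, cornerTerm, ← sub_div, div_eq_iff hy]
  exact_mod_cast hint

noncomputable def edgeDefect (v w : Fin 2 → ℤ) : ℝ :=
  segAngle v w - π / 2 * det2 v w - π / 6 * (cornerTerm w v - cornerTerm v w)

lemma edgeDefect_swap {v w : Fin 2 → ℤ} (h : IsUnit (det2 v w)) :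
    edgeDefect w v = -edgeDefect v w := by
  rw [edgeDefect, edgeDefect, segAngle_swap h.ne_zero, det2_swap]
  push_cast
  ring

lemma eq_add_add_mul_mul_of_abs_sub_lt {e₁ e₂ e₃ k : ℤ} (h₁ : IsUnit e₁) (h₂ : IsUnit e₂)
    (h₃ : IsUnit e₃) (hk : |4 * k - (e₁ + e₂ + e₃)| < 3) :
    4 * k = e₁ + e₂ + e₃ + e₁ * e₂ * e₃ := by
  rw [abs_lt] at hk
  rcases Int.isUnit_iff.mp h₁ with rfl | rfl <;> rcases Int.isUnit_iff.mp h₂ with rfl | rfl <;>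
    rcases Int.isUnit_iff.mp h₃ with rfl | rfl <;> omega

lemma edgeDefect_add_edgeDefect_add_edgeDefect {x y z : Fin 2 → ℤ} (hxy : IsUnit (det2 x y))
    (hyz : IsUnit (det2 y z)) (hzx : IsUnit (det2 z x)) :
    edgeDefect x y + edgeDefect y z + edgeDefect z x = 0 := by
  obtain ⟨k, hk⟩ := exists_segAngle_add_segAngle_add_segAngle (ne_zero_of_isUnit_det2 hzx)
    (ne_zero_of_isUnit_det2 hxy) (ne_zero_of_isUnit_det2 hyz)
  have hcorner := cornerTerm_sub_cornerTerm hxy hyz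
  have hcorner' := cornerTerm_sub_cornerTerm hyz hzx
  have hcorner'' := cornerTerm_sub_cornerTerm hzx hxy
  have hb₁ := abs_lt.mp (abs_segAngle_sub_lt hxy)
  have hb₂ := abs_lt.mp (abs_segAngle_sub_lt hyz)
  have hb₃ := abs_lt.mp (abs_segAngle_sub_lt hzx)
  have hwind : |4 * k - (det2 x y + det2 y z + det2 z x)| < 3 := by
    have : |((4 * k - (det2 x y + det2 y z + det2 z x) : ℤ) : ℝ)| < 3 := by
      rw [abs_lt]
      push_cast
      constructor <;> nlinarith [pi_pos]
    exact_mod_cast this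
  have h4 := eq_add_add_mul_mul_of_abs_sub_lt hxy hyz hzx hwind
  have h4' : (4 * k : ℝ) = det2 x y + det2 y z + det2 z x + det2 x y * det2 y z * det2 z x := by
    exact_mod_cast h4
  simp only [edgeDefect]
  push_cast at hcorner hcorner' hcorner''
  linear_combination hk + π / 2 * h4' - π / 6 * (hcorner + hcorner' + hcorner'')

lemma dotProduct_self_eq_one {v : Fin 2 → ℤ} (hv : norm1 v = 1) : v ⬝ᵥ v = 1 := by
  have : (|v 0| = 0 ∧ |v 1| = 1) ∨ (|v 0| = 1 ∧ |v 1| = 0) := by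
    unfold norm1 at hv
    have := abs_nonneg (v 0)
    have := abs_nonneg (v 1)
    omega
  simp only [dotProduct, Fin.sum_univ_two, ← sq, ← sq_abs (v 0), ← sq_abs (v 1)]
  rcases this with ⟨h0, h1⟩ | ⟨h0, h1⟩ <;> simp [h0, h1]

lemma dotProduct_eq_zero_of_norm1_eq_one {v w : Fin 2 → ℤ} (h : IsUnit (det2 v w))
    (hv : norm1 v = 1) (hw : norm1 w = 1) : v ⬝ᵥ w = 0 := by
  have hlagrange : (v ⬝ᵥ v) * (w ⬝ᵥ w) = (v ⬝ᵥ w) ^ 2 + det2 v w * det2 v w := by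
    simp only [det2, dotProduct, Fin.sum_univ_two]; ring
  rw [dotProduct_self_eq_one hv, dotProduct_self_eq_one hw, Int.isUnit_mul_self h] at hlagrange
  exact pow_eq_zero_iff (n := 2) two_ne_zero |>.mp (by linarith)

lemma edgeDefect_eq_zero {v w : Fin 2 → ℤ} (h : IsUnit (det2 v w)) (hv : norm1 v = 1)
    (hw : norm1 w = 1) : edgeDefect v w = 0 := by
  have h0 := dotProduct_eq_zero_of_norm1_eq_one h hv hw
  rw [edgeDefect, cornerTerm, cornerTerm, dotProduct_comm w v, h0,
    segAngle_eq_of_dotProduct_eq_zero h h0]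
  simp

lemma isFareyCocycle_edgeDefect : IsFareyCocycle edgeDefect :=
  ⟨fun _ _ => edgeDefect_swap, fun _ _ _ => edgeDefect_add_edgeDefect_add_edgeDefect⟩

lemma sum_cornerTerm_sub_cornerTerm {d : ℕ} [NeZero d] (v : Fin d → Fin 2 → ℤ)
    (h : ∀ i, IsUnit (det2 (v i) (v (i + 1)))) :
    ∑ i, (cornerTerm (v (i + 1)) (v i) - cornerTerm (v i) (v (i + 1))) =
      ∑ i, ((det2 (v (i - 1)) (v i) * det2 (v i) (v (i + 1)) *
        det2 (v (i + 1)) (v (i - 1)) : ℤ) : ℝ) := by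
  rw [Finset.sum_sub_distrib,
    ← (Equiv.subRight 1).sum_comp fun i => cornerTerm (v i) (v (i + 1)), ← Finset.sum_sub_distrib]
  refine Finset.sum_congr rfl fun i _ => ?_
  have hprev := h (i - 1)
  simp only [Equiv.subRight_apply, sub_add_cancel] at hprev ⊢
  exact cornerTerm_sub_cornerTerm hprev (h i)

lemma sum_edgeDefect_eq_zero {d : ℕ} [NeZero d] (v : Fin d → Fin 2 → ℤ)
    (h : ∀ i, IsUnit (det2 (v i) (v (i + 1)))) : ∑ i, edgeDefect (v i) (v (i + 1)) = 0 := by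
  rw [Finset.sum_congr rfl fun i _ =>
      isFareyCocycle_edgeDefect.eq_fareyPotential_sub (fun _ _ => edgeDefect_eq_zero) (h i),
    Finset.sum_sub_distrib]
  exact sub_eq_zero.mpr <|
    Equiv.sum_comp (Equiv.addRight 1) fun i => fareyPotential edgeDefect (v i)

end UnimodularSequence

open UnimodularSequence in
theorem rotation_number_of_unimodular_sequence_general
    (d : ℕ) [NeZero d] (v : Fin d → Fin 2 → ℤ)
    (ε : Fin d → ℤ) (hε : ∀ i, ε i = det2 (v i) (v (i + 1)))
    (hεuni : ∀ i, ε i = 1 ∨ ε i = -1)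
    (a : Fin d → ℚ)
    (ha : ∀ i, a i = (ε (i - 1) : ℚ)⁻¹ * (ε i : ℚ)⁻¹ * (det2 (v (i + 1)) (v (i - 1)) : ℚ)) :
    rotationNumber v = (1 / 12) * ∑ i : Fin d, (3 * (ε i : ℝ) + (a i : ℝ)) := by
  have hunit : ∀ i, IsUnit (det2 (v i) (v (i + 1))) :=
    fun i => hε i ▸ Int.isUnit_iff.mpr (hεuni i)
  have ha' : ∀ i, (a i : ℝ) = ((det2 (v (i - 1)) (v i) * det2 (v i) (v (i + 1)) *
      det2 (v (i + 1)) (v (i - 1)) : ℤ) : ℝ) := by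
    intro i
    have hprev : ε (i - 1) = det2 (v (i - 1)) (v i) := by simpa using hε (i - 1)
    rw [ha i, ← hprev, ← hε i]
    rcases hεuni (i - 1) with h1 | h1 <;> rcases hεuni i with h2 | h2 <;> simp [h1, h2]
  have hcorner : ∑ i, (cornerTerm (v (i + 1)) (v i) - cornerTerm (v i) (v (i + 1))) =
      ∑ i, (a i : ℝ) := by
    rw [sum_cornerTerm_sub_cornerTerm v hunit]
    exact Finset.sum_congr rfl fun i _ => (ha' i).symm
  have hdefect := sum_edgeDefect_eq_zero v hunit
  simp only [edgeDefect, Finset.sum_sub_distrib, ← Finset.mul_sum] at hdefect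
  rw [← Finset.sum_sub_distrib, hcorner] at hdefect
  simp only [← hε] at hdefect
  rw [rotationNumber, Finset.sum_add_distrib, ← Finset.mul_sum]
  field_simp
  linear_combination 12 * hdefect

/-- Theorem (Higashitani–Masuda): the rotation number of a unimodular sequence
`v 1, …, v d` of primitive vectors equals `(1/12) ∑ (3 εᵢ + aᵢ)`. -/
theorem rotation_number_of_unimodular_sequence
    (d : ℕ) [NeZero d] (v : Fin d → Fin 2 → ℤ)
    (hprim : ∀ i, Primitive (v i))
    (ε : Fin d → ℤ) (hε : ∀ i, ε i = det2 (v i) (v (i + 1)))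
    (hεuni : ∀ i, ε i = 1 ∨ ε i = -1)
    (a : Fin d → ℚ)
    (ha : ∀ i, a i = (ε (i - 1) : ℚ)⁻¹ * (ε i : ℚ)⁻¹ * (det2 (v (i + 1)) (v (i - 1)) : ℚ)) :
    rotationNumber v = (1 / 12) * ∑ i : Fin d, (3 * (ε i : ℝ) + (a i : ℝ)) :=
  rotation_number_of_unimodular_sequence_general d v ε hε hεuni a ha
end

section
/- Let v, w ∈ ℤ² be primitive vectors with ε = det(v, w) ≠ 0. Then there exists a unique non-negative integer x < |ε| such that the matrix P = (v, w)·[[1, −x],[0, |ε|]]^{−1} is a unimodular integer matrix; moreover, for this x, x and |ε| are relatively prime. -/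
/-- the 2×2 matrix with columns `v` and `w` -/
def colMat (v w : Fin 2 → ℤ) : Matrix (Fin 2) (Fin 2) ℤ := !![v 0, w 0; v 1, w 1]

/-- a 2×2 integer matrix is unimodular if its determinant is `±1` -/
def Unimod (A : Matrix (Fin 2) (Fin 2) ℤ) : Prop := A.det = 1 ∨ A.det = -1

/-!
Write `e = |ε|` and `M = [[1, -x], [0, e]]`. An integer matrix `P` with `P M = (v, w)` must have
first column `v` and second column `(w + x v) / e`, so it exists iff `e ∣ w + x v`; it is then
automatically unimodular, because `det P · e = ε`. Since `v` is primitive, `s v₀ + t v₁ = 1` for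
some `s, t`, and `x = -(s w₀ + t w₁)` works: then `w + x v = ε (-t, s)`. The same Bézout relation
shows that `e ∣ (x - y) v` forces `e ∣ x - y`, whence uniqueness modulo `e`. Finally
`gcd(x, e)` divides `w = (w + x v) - x v`, so it is `1` because `w` is primitive.
-/

lemma det_colMat (v w : Fin 2 → ℤ) : (colMat v w).det = det2 v w := by
  rw [colMat, Matrix.det_fin_two_of, det2]
  ring

lemma exists_mul_eq_colMat_iff (v w : Fin 2 → ℤ) (x e : ℤ) :
    (∃ P : Matrix (Fin 2) (Fin 2) ℤ, P * !![1, -x; 0, e] = colMat v w) ↔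
      ∀ i, e ∣ v i * x + w i := by
  rw [Fin.forall_fin_two]
  constructor
  · rintro ⟨P, hP⟩
    have h := congrArg (fun A ↦ (A 0 0, A 0 1, A 1 0, A 1 1)) hP
    simp only [Matrix.mul_apply, Fin.sum_univ_two, colMat, Prod.mk.injEq, Matrix.of_apply,
      Matrix.cons_val', Matrix.cons_val_zero, Matrix.cons_val_one, Matrix.empty_val',
      Matrix.cons_val_fin_one, mul_one, mul_zero, add_zero] at h
    obtain ⟨h00, h01, h10, h11⟩ := h
    exact ⟨⟨P 0 1, by linear_combination -x * h00 - h01⟩,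
      ⟨P 1 1, by linear_combination -x * h10 - h11⟩⟩
  · rintro ⟨⟨b, hb⟩, ⟨d, hd⟩⟩
    refine ⟨!![v 0, b; v 1, d], ?_⟩
    ext i j
    fin_cases i <;> fin_cases j <;> simp [colMat] <;> linarith

lemma unimod_of_mul_eq_colMat {v w : Fin 2 → ℤ} (hε : det2 v w ≠ 0) {x : ℤ}
    {P : Matrix (Fin 2) (Fin 2) ℤ} (hP : P * !![1, -x; 0, |det2 v w|] = colMat v w) :
    Unimod P := by
  have hdet : P.det * |det2 v w| = det2 v w := by
    simpa [Matrix.det_mul, Matrix.det_fin_two_of, det_colMat] using congrArg Matrix.det hP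
  have habs : |P.det| * |det2 v w| = |det2 v w| := by
    simpa [abs_mul] using congrArg abs hdet
  exact abs_eq zero_le_one |>.mp ((mul_eq_right₀ (abs_ne_zero.mpr hε)).mp habs)

lemma exists_unimod_mul_eq_colMat_iff {v w : Fin 2 → ℤ} (hε : det2 v w ≠ 0) (x : ℤ) :
    (∃ P : Matrix (Fin 2) (Fin 2) ℤ, Unimod P ∧ P * !![1, -x; 0, |det2 v w|] = colMat v w) ↔
      ∀ i, |det2 v w| ∣ v i * x + w i := by
  rw [← exists_mul_eq_colMat_iff]
  exact ⟨fun ⟨P, _, hP⟩ ↦ ⟨P, hP⟩, fun ⟨P, hP⟩ ↦ ⟨P, unimod_of_mul_eq_colMat hε hP, hP⟩⟩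

namespace Primitive

variable {v : Fin 2 → ℤ}

lemma bezout (hv : Primitive v) :
    v 0 * Int.gcdA (v 0) (v 1) + v 1 * Int.gcdB (v 0) (v 1) = 1 := by
  rw [← Int.gcd_eq_gcd_ab, hv, Nat.cast_one]

lemma dvd_of_forall_dvd_mul (hv : Primitive v) {e a : ℤ} (h : ∀ i, e ∣ v i * a) : e ∣ a := by
  have ha : a = Int.gcdA (v 0) (v 1) * (v 0 * a) + Int.gcdB (v 0) (v 1) * (v 1 * a) := by
    linear_combination -a * hv.bezout
  rw [ha]
  exact dvd_add ((h 0).mul_left _) ((h 1).mul_left _)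

lemma exists_forall_dvd_mul_add (hv : Primitive v) (w : Fin 2 → ℤ) :
    ∃ x, ∀ i, det2 v w ∣ v i * x + w i := by
  refine ⟨-(Int.gcdA (v 0) (v 1) * w 0 + Int.gcdB (v 0) (v 1) * w 1),
    Fin.forall_fin_two.mpr ⟨?_, ?_⟩⟩
  · exact ⟨-Int.gcdB (v 0) (v 1), by simp only [det2]; linear_combination -w 0 * hv.bezout⟩
  · exact ⟨Int.gcdA (v 0) (v 1), by simp only [det2]; linear_combination -w 1 * hv.bezout⟩

lemma dvd_sub_of_forall_dvd_mul_add (hv : Primitive v) {w : Fin 2 → ℤ} {e x y : ℤ}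
    (hx : ∀ i, e ∣ v i * x + w i) (hy : ∀ i, e ∣ v i * y + w i) : e ∣ x - y :=
  hv.dvd_of_forall_dvd_mul fun i ↦ by
    simpa [mul_sub] using dvd_sub (hx i) (hy i)

lemma gcd_eq_one_of_forall_dvd_mul_add {w : Fin 2 → ℤ} (hw : Primitive w) {e x : ℤ}
    (h : ∀ i, e ∣ v i * x + w i) : Int.gcd x e = 1 := by
  have hg : ∀ i, (Int.gcd x e : ℤ) ∣ w i := fun i ↦ by
    have := dvd_sub ((Int.gcd_dvd_right x e).trans (h i)) ((Int.gcd_dvd_left x e).mul_left (v i))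
    rwa [add_sub_cancel_left] at this
  have := Int.dvd_coe_gcd (hg 0) (hg 1)
  rw [hw, Nat.cast_one] at this
  exact Int.ofNat_dvd.mp this |> Nat.dvd_one.mp

end Primitive

lemma forall_dvd_mul_emod_add {v w : Fin 2 → ℤ} {e x : ℤ} (h : ∀ i, e ∣ v i * x + w i) :
    ∀ i, e ∣ v i * (x % e) + w i := fun i ↦ by
  have hi : v i * (x % e) + w i = v i * x + w i - e * (v i * (x / e)) := by
    rw [Int.emod_def]
    ring
  rw [hi]
  exact dvd_sub (h i) (dvd_mul_right _ _)

/-- Lemma 2.1: for primitive `v, w` with `ε = det(v, w) ≠ 0` there is a unique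
`0 ≤ x < |ε|` such that `(v, w)·[[1, -x],[0, |ε|]]⁻¹` is a unimodular integer matrix,
and this `x` is relatively prime to `|ε|`. -/
theorem exists_unique_x_unimodular
    (v w : Fin 2 → ℤ) (hv : Primitive v) (hw : Primitive w) (hε : det2 v w ≠ 0) :
    (∃! x : ℤ, 0 ≤ x ∧ x < |det2 v w| ∧
      ∃ P : Matrix (Fin 2) (Fin 2) ℤ, Unimod P ∧
        P * !![1, -x; 0, |det2 v w|] = colMat v w) ∧
    (∀ x : ℤ, (0 ≤ x ∧ x < |det2 v w| ∧
      ∃ P : Matrix (Fin 2) (Fin 2) ℤ, Unimod P ∧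
        P * !![1, -x; 0, |det2 v w|] = colMat v w) →
      Int.gcd x |det2 v w| = 1) := by
  simp only [exists_unimod_mul_eq_colMat_iff hε]
  set e := |det2 v w|
  have he : 0 < e := abs_pos.mpr hε
  obtain ⟨x₀, hx₀⟩ := hv.exists_forall_dvd_mul_add w
  have hx : ∀ i, e ∣ v i * (x₀ % e) + w i :=
    forall_dvd_mul_emod_add fun i ↦ (abs_dvd _ _).mpr (hx₀ i)
  have hx_nonneg : 0 ≤ x₀ % e := Int.emod_nonneg _ he.ne'
  have hx_lt : x₀ % e < e := Int.emod_lt_of_pos _ he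
  refine ⟨⟨x₀ % e, ⟨hx_nonneg, hx_lt, hx⟩, ?_⟩,
    fun x ⟨_, _, hxd⟩ ↦ hw.gcd_eq_one_of_forall_dvd_mul_add hxd⟩
  rintro y ⟨hy_nonneg, hy_lt, hyd⟩
  have hsub : y - x₀ % e = 0 :=
    Int.eq_zero_of_abs_lt_dvd (hv.dvd_sub_of_forall_dvd_mul_add hyd hx)
      (abs_sub_lt_iff.mpr ⟨by omega, by omega⟩)
  exact sub_eq_zero.mp hsub
end

section
/- Let m ≥ 2 and let x < m be a positive integer relatively prime to m, with Hirzebruch–Jung continued fraction expansion m/x = n_1 − 1/(n_2 − 1/(⋯ − 1/n_l)), all n_j ≥ 2. Let y < m be the unique positive integer with x·y ≡ 1 (mod m). Then the matrix product [[0, −1],[1, n_1]]·[[0, −1],[1, n_2]]⋯[[0, −1],[1, n_l]] equals [[(1 − xy)/m, −x],[y, m]]. -/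
/-!
Peel off the first entry. If `m / x = n - 1 / v` with `v > 1`, then `x' := n x - m` satisfies
`0 < x' < x` and `v = x / x'`, so the tail of the expansion is that of `x / x'`. Writing
`x y - 1 = m k`, the cofactor `k` lies in `(0, x)` and inverts `x'` modulo `x`, so by induction the
tail product is `[[(1 - x' k) / x, -x'], [k, x]]`, and multiplying by `[[0, -1], [1, n]]` on the
left gives `[[(1 - x y) / m, -x], [y, m]]`.
-/

/-- value of the Hirzebruch–Jung continued fraction `n₁ - 1/(n₂ - 1/(⋯ - 1/n_l))`
(the empty continued fraction has value `0`, and `1/0 = 0` in `ℚ` makes the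
singleton case evaluate to `n₁`). -/
def hjEval : List ℤ → ℚ
  | [] => 0
  | n :: ns => (n : ℚ) - 1 / hjEval ns

theorem hjEval_singleton (n : ℤ) : hjEval [n] = n := by
  simp [hjEval]

theorem one_lt_hjEval {ns : List ℤ} (hne : ns ≠ []) (hns : ∀ n ∈ ns, 2 ≤ n) :
    1 < hjEval ns := by
  induction ns with
  | nil => exact absurd rfl hne
  | cons n t ih =>
    have hn : (2 : ℚ) ≤ n := by exact_mod_cast hns n List.mem_cons_self
    rcases eq_or_ne t [] with rfl | ht
    · rw [hjEval_singleton]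
      linarith
    · have hv : 1 < hjEval t := ih ht fun k hk => hns k (List.mem_cons_of_mem n hk)
      have hinv : 1 / hjEval t < 1 := (div_lt_one (by linarith)).2 hv
      simp only [hjEval]
      linarith

theorem eq_div_of_sub_one_div_eq_div {n m x : ℤ} {v : ℚ} (hx : x ≠ 0)
    (h : (n : ℚ) - 1 / v = m / x) : v = x / (n * x - m : ℤ) := by
  have hinv : 1 / v = ((n * x - m : ℤ) : ℚ) / x := by
    rw [show 1 / v = n - m / x by linarith]
    push_cast
    field_simp
  rw [← one_div_one_div v, hinv, one_div_div]

theorem pos_and_lt_of_one_lt_div {a b : ℤ} (ha : 0 < a) (h : 1 < (a : ℚ) / b) :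
    0 < b ∧ b < a := by
  rcases one_lt_div_iff.1 h with ⟨hb, hba⟩ | ⟨hb, hab⟩
  · exact ⟨by exact_mod_cast hb, by exact_mod_cast hba⟩
  · exact absurd (hab.trans hb) (by exact_mod_cast ha.le.not_gt)

theorem pos_and_lt_of_mul_sub_one_eq_mul {m x y k : ℤ} (hx : 2 ≤ x) (hy0 : 0 < y) (hym : y < m)
    (hk : x * y - 1 = m * k) : 0 < k ∧ k < x :=
  ⟨by nlinarith, by nlinarith⟩

def hjMatrix (m x y : ℤ) : Matrix (Fin 2) (Fin 2) ℤ :=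
  !![(1 - x * y) / m, -x; y, m]

theorem hjMatrix_eq_of_eq_mul {m n x y : ℤ} (hx0 : 0 < x) (hy0 : 0 < y) (hym : y < m)
    (hxy : m ∣ x * y - 1) (hmn : m = n * x) : hjMatrix m x y = !![0, -1; 1, n] := by
  have hx : x = 1 :=
    Int.eq_one_of_dvd_one hx0.le <| by
      simpa using (dvd_sub (Dvd.intro_left n hmn.symm |>.trans hxy) (dvd_mul_right x y))
  subst hx
  have hy : y = 1 := by
    have := Int.eq_zero_of_abs_lt_dvd (by simpa using hxy) (by rw [abs_lt]; constructor <;> omega)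
    omega
  subst hy
  simp [hjMatrix, hmn]

theorem hjMatrix_step {m x y k : ℤ} (n : ℤ) (hm : m ≠ 0) (hx : x ≠ 0)
    (hk : x * y - 1 = m * k) :
    !![0, -1; 1, n] * hjMatrix x (n * x - m) k = hjMatrix m x y := by
  have h₁ : (1 - x * y) / m = -k := by
    rw [show 1 - x * y = m * -k by linear_combination -hk]
    exact Int.mul_ediv_cancel_left _ hm
  have h₂ : (1 - (n * x - m) * k) / x = y - n * k := by
    rw [show 1 - (n * x - m) * k = x * (y - n * k) by linear_combination -hk]
    exact Int.mul_ediv_cancel_left _ hx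
  rw [hjMatrix, hjMatrix, h₁, h₂, Matrix.mul_fin_two]
  congr 1
  simp only [zero_mul, one_mul, neg_one_mul, zero_add, sub_add_cancel, neg_sub]

theorem hj_matrix_product_general (m x y : ℤ)
    (hx0 : 0 < x) (hy0 : 0 < y) (hym : y < m) (hxy : m ∣ x * y - 1)
    (ns : List ℤ) (hns : ∀ n ∈ ns, 2 ≤ n) (hhj : hjEval ns = (m : ℚ) / (x : ℚ)) :
    (ns.map fun n => !![0, -1; 1, n]).prod = !![(1 - x * y) / m, -x; y, m] := by
  induction ns generalizing m x y with
  | nil =>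
    have hpos : (0 : ℚ) < m / x := div_pos (by exact_mod_cast hy0.trans hym) (by exact_mod_cast hx0)
    exact absurd hhj (by simp only [hjEval]; exact hpos.ne)
  | cons n tail ih =>
    rcases eq_or_ne tail [] with rfl | htail
    · have hmn : m = n * x := by
        rw [hjEval_singleton, eq_div_iff (by exact_mod_cast hx0.ne')] at hhj
        exact_mod_cast hhj.symm
      simp only [List.map_cons, List.map_nil, List.prod_cons, List.prod_nil, mul_one]
      exact (hjMatrix_eq_of_eq_mul hx0 hy0 hym hxy hmn).symm
    · have hns' : ∀ k ∈ tail, 2 ≤ k := fun k hk => hns k (List.mem_cons_of_mem n hk)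
      have hv := eq_div_of_sub_one_div_eq_div hx0.ne' hhj
      obtain ⟨hx'0, hx'x⟩ := pos_and_lt_of_one_lt_div hx0 (hv ▸ one_lt_hjEval htail hns')
      obtain ⟨k, hk⟩ := hxy
      obtain ⟨hk0, hkx⟩ := pos_and_lt_of_mul_sub_one_eq_mul (by omega) hy0 hym hk
      rw [List.map_cons, List.prod_cons,
        ih x (n * x - m) k hx'0 hk0 hkx ⟨n * k - y, by linear_combination hk⟩ hns' hv]
      exact hjMatrix_step n (by omega) hx0.ne' hk

/-- Lemma 3.1: if `m/x = n₁ - 1/(n₂ - 1/(⋯ - 1/n_l))` is the Hirzebruch–Jung continued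
fraction expansion and `y < m` is the unique positive integer with `x y ≡ 1 (mod m)`, then
`[[0,-1],[1,n₁]] ⋯ [[0,-1],[1,n_l]] = [[(1-xy)/m, -x],[y, m]]`. -/
theorem hj_matrix_product (m x y : ℤ) (hm : 2 ≤ m)
    (hx0 : 0 < x) (hxm : x < m) (hcop : Int.gcd x m = 1)
    (hy0 : 0 < y) (hym : y < m) (hxy : m ∣ x * y - 1)
    (ns : List ℤ) (hns : ∀ n ∈ ns, 2 ≤ n) (hhj : hjEval ns = (m : ℚ) / (x : ℚ)) :
    (ns.map fun n => !![0, -1; 1, n]).prod = !![(1 - x * y) / m, -x; y, m] :=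
  hj_matrix_product_general m x y hx0 hy0 hym hxy ns hns hhj
end

section
/- Let v, w ∈ ℤ² be primitive vectors with ε = det(v, w) ≠ 0. Let x (resp. y) be the unique non-negative integer less than |ε| such that P = (v, w)·[[1, −x],[0, |ε|]]^{−1} (resp. Q = (w, v)·[[1, −y],[0, |ε|]]^{−1}) is a unimodular integer matrix. Then Q^{−1}·P = [[−y, (1 − xy)/|ε|],[|ε|, x]]; in particular x·y ≡ 1 (mod |ε|). -/
/-- If `x` (resp. `y`) is the integer of Lemma 2.1 for the pair `(v, w)` (resp. `(w, v)`),
with unimodular matrices `P` (resp. `Q`), then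
`Q⁻¹ P = [[-y, (1-xy)/|ε|],[|ε|, x]]`; in particular `x y ≡ 1 (mod |ε|)`. -/
theorem Qinv_mul_P (v w : Fin 2 → ℤ) (hv : Primitive v) (hw : Primitive w)
    (hε : det2 v w ≠ 0)
    (x y : ℤ) (hx0 : 0 ≤ x) (hx1 : x < |det2 v w|) (hy0 : 0 ≤ y) (hy1 : y < |det2 v w|)
    (P Q : Matrix (Fin 2) (Fin 2) ℤ)
    (hP : Unimod P) (hPeq : P * !![1, -x; 0, |det2 v w|] = colMat v w)
    (hQ : Unimod Q) (hQeq : Q * !![1, -y; 0, |det2 v w|] = colMat w v) :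
    ∃ k : ℤ, 1 - x * y = k * |det2 v w| ∧
      Q⁻¹ * P = !![-y, k; |det2 v w|, x] := by
  set e : ℤ := |det2 v w| with he_def
  have he : e ≠ 0 := fun h => hε (abs_eq_zero.mp h)
  rw [Matrix.eta_fin_two P, Matrix.mul_fin_two] at hPeq
  rw [Matrix.eta_fin_two Q, Matrix.mul_fin_two] at hQeq
  unfold colMat at hPeq hQeq
  have hP00 : P 0 0 = v 0 := by have := congrFun (congrFun hPeq 0) 0; simpa using this
  have hP10 : P 1 0 = v 1 := by have := congrFun (congrFun hPeq 1) 0; simpa using this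
  have hA : e * P 0 1 = w 0 + x * v 0 := by
    have := congrFun (congrFun hPeq 0) 1; simp at this
    rw [hP00] at this; linarith
  have hB : e * P 1 1 = w 1 + x * v 1 := by
    have := congrFun (congrFun hPeq 1) 1; simp at this
    rw [hP10] at this; linarith
  have hQ00 : Q 0 0 = w 0 := by have := congrFun (congrFun hQeq 0) 0; simpa using this
  have hQ10 : Q 1 0 = w 1 := by have := congrFun (congrFun hQeq 1) 0; simpa using this
  have hC : e * Q 0 1 = v 0 + y * w 0 := by
    have := congrFun (congrFun hQeq 0) 1; simp at this
    rw [hQ00] at this; linarith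
  have hD : e * Q 1 1 = v 1 + y * w 1 := by
    have := congrFun (congrFun hQeq 1) 1; simp at this
    rw [hQ10] at this; linarith
  -- det Q * e = - det2 v w
  have hdetQ : Q.det * e = -(det2 v w) := by
    have h1 : (P * !![1, -x; 0, e]).det = (colMat v w).det := by
      rw [Matrix.eta_fin_two P, Matrix.mul_fin_two]; exact congrArg Matrix.det hPeq
    have h2 : (Q * !![1, -y; 0, e]).det = (colMat w v).det := by
      rw [Matrix.eta_fin_two Q, Matrix.mul_fin_two]; exact congrArg Matrix.det hQeq
    rw [Matrix.det_mul] at h2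
    have : (!![1, -y; 0, e] : Matrix (Fin 2) (Fin 2) ℤ).det = e := by
      simp [Matrix.det_fin_two_of]
    rw [this] at h2
    have : (colMat w v).det = -(det2 v w) := by
      simp [colMat, Matrix.det_fin_two_of, det2]; ring
    rw [this] at h2; exact h2
  set q : ℤ := Q.det with hq_def
  have hq : q = 1 ∨ q = -1 := hQ
  have hE : q * e = -(v 0 * w 1 - v 1 * w 0) := by rw [hdetQ]; rfl
  have hq2 : q * q = 1 := by rcases hq with h | h <;> rw [h] <;> ring
  set k : ℤ := q * (Q 1 1 * P 0 1 - Q 0 1 * P 1 1) with hk_def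
  have hkey : (k * e - (1 - x * y)) * (e * e) = 0 := by
    rw [hk_def]
    linear_combination (q * e * ((e * Q 1 1) * hA + (w 0 + x * v 0) * hD
        - (e * Q 0 1) * hB - (w 1 + x * v 1) * hC)) + ((x * y - 1) * q * e) * hE
      + ((1 - x * y) * e * e) * hq2
  have hk : 1 - x * y = k * e := by
    rcases mul_eq_zero.mp hkey with h | h
    · linarith
    · exact absurd h (mul_ne_zero he he)
  refine ⟨k, hk, ?_⟩
  have hM : P = Q * !![-y, k; e, x] := by
    have h01 : P 0 1 = Q 0 0 * k + Q 0 1 * x := by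
      have h : e * P 0 1 = e * (Q 0 0 * k + Q 0 1 * x) := by
        rw [hQ00]; linear_combination hA + w 0 * hk - x * hC
      exact mul_left_cancel₀ he h
    have h11 : P 1 1 = Q 1 0 * k + Q 1 1 * x := by
      have h : e * P 1 1 = e * (Q 1 0 * k + Q 1 1 * x) := by
        rw [hQ10]; linear_combination hB + w 1 * hk - x * hD
      exact mul_left_cancel₀ he h
    ext i j
    fin_cases i <;> fin_cases j <;>
      simp [Matrix.mul_apply, Fin.sum_univ_two]
    · rw [hP00, hQ00]; linarith [hC]
    · exact h01
    · rw [hP10, hQ10]; linarith [hD]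
    · exact h11
  have hQunit : IsUnit Q.det := by
    rcases hq with h | h <;> rw [← hq_def, h]
    · exact isUnit_one
    · exact isUnit_one.neg
  rw [hM, ← mul_assoc, Matrix.nonsing_inv_mul Q hQunit, one_mul]
end

section
/- Let v, w ∈ ℤ² be primitive vectors with ε = det(v, w) ≠ 0 and |ε| ≥ 2. Let x (resp. y) be the unique non-negative integer less than |ε| such that (v, w)·[[1, −x],[0, |ε|]]^{−1} (resp. (w, v)·[[1, −y],[0, |ε|]]^{−1}) is a unimodular integer matrix, and let |ε|/x = n_1 − 1/(n_2 − 1/(⋯ − 1/n_l)), all n_j ≥ 2, be the Hirzebruch–Jung continued fraction expansion. Then [[0, −1],[1, n_1]]·[[0, −1],[1, n_2]]⋯[[0, −1],[1, n_l]] = [[(1 − xy)/|ε|, −x],[y, |ε|]]. -/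
/-! Writing `m = |det(v, w)|`, the two normal forms say `w ≡ -x v` and `v ≡ -y w` modulo `m`,
so `v ≡ x y v`, and primitivity of `v` gives `m ∣ 1 - x y`; in particular `x` is prime to `m`.
On the other side, by induction on the expansion, every product `[[0,-1],[1,n₁]] ⋯ [[0,-1],[1,n_l]]`
with all `nⱼ ≥ 2` has the shape `[[k, -x'], [y', m']]` with determinant one, `0 < x' < m'`,
`0 ≤ y' < m'` and `m'/x' = n₁ - 1/(⋯ - 1/n_l)`.  Both `m/x` and `m'/x'` are reduced, so `x' = x`
and `m' = m`; then `x y ≡ 1 ≡ x y'` modulo `m` forces `y' = y`. -/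

def hjMat (n : ℤ) : Matrix (Fin 2) (Fin 2) ℤ := !![0, -1; 1, n]

lemma hjMat_mul (n k x y m : ℤ) :
    hjMat n * !![k, -x; y, m] = !![-y, -m; k + n * y, n * m - x] := by
  simp [hjMat, sub_eq_neg_add]

lemma hjMat_mul_bounds {n k x y m : ℤ} (hn : 2 ≤ n) (hdet : k * m + x * y = 1) (hx : 0 < x)
    (hxm : x < m) (hy : 0 ≤ y) (hym : y < m) :
    0 ≤ k + n * y ∧ k + n * y < n * m - x ∧ m < n * m - x := by
  have hy1 : 1 ≤ y := by
    by_contra! hy0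
    have : m ∣ 1 := ⟨k, by linear_combination -hdet + x * (by omega : y = 0)⟩
    have := Int.le_of_dvd one_pos this
    omega
  have hky : -y < k := by nlinarith
  have key : 1 < (m - y) * (n * m - x) := one_lt_mul_of_le_of_lt (by omega) (by nlinarith)
  -- multiplied by `m` and using `k m = 1 - x y`, the middle bound is exactly `key`
  refine ⟨by nlinarith, lt_of_mul_lt_mul_left (a := m) ?_ (by omega), by nlinarith⟩
  linear_combination key + hdet

theorem exists_prod_map_hjMat (n : ℤ) (ns : List ℤ) (hns : ∀ a ∈ n :: ns, 2 ≤ a) :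
    ∃ k x y m : ℤ, ((n :: ns).map hjMat).prod = !![k, -x; y, m] ∧ k * m + x * y = 1 ∧
      0 < x ∧ x < m ∧ 0 ≤ y ∧ y < m ∧ hjEval (n :: ns) = m / x := by
  induction ns generalizing n with
  | nil =>
    have hn := hns n (.head _)
    exact ⟨0, 1, 1, n, by simp [hjMat], by ring, one_pos, by omega, zero_le_one, by omega,
      by simp [hjEval]⟩
  | cons n' ns ih =>
    obtain ⟨k, x, y, m, hprod, hdet, hx, hxm, hy, hym, hval⟩ :=
      ih n' fun a ha => hns a (.tail _ ha)
    obtain ⟨hy', hym', hmx⟩ := hjMat_mul_bounds (hns n (.head _)) hdet hx hxm hy hym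
    refine ⟨-y, m, k + n * y, n * m - x, ?_, by linear_combination hdet, by omega, hmx, hy',
      hym', ?_⟩
    · rw [List.map_cons, List.prod_cons, hprod, hjMat_mul]
    · have hmQ : (m : ℚ) ≠ 0 := by exact_mod_cast (by omega : m ≠ 0)
      rw [hjEval, hval]
      push_cast
      field_simp

lemma modEq_of_mul_eq_colMat {P : Matrix (Fin 2) (Fin 2) ℤ} {x m : ℤ} {v w : Fin 2 → ℤ}
    (h : P * !![1, -x; 0, m] = colMat v w) (i : Fin 2) : w i ≡ -x * v i [ZMOD m] := by
  have hv : P i 0 = v i := by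
    have := congrFun (congrFun h i) 0
    fin_cases i <;> simpa [Matrix.mul_apply, colMat] using this
  have hw : -(P i 0 * x) + P i 1 * m = w i := by
    have := congrFun (congrFun h i) 1
    fin_cases i <;> simpa [Matrix.mul_apply, colMat] using this
  exact Int.modEq_iff_dvd.mpr ⟨-P i 1, by rw [← hv, ← hw]; ring⟩

lemma Primitive.dvd_of_forall_dvd_mul_s9 {v : Fin 2 → ℤ} (hv : Primitive v) {m c : ℤ}
    (h : ∀ i, m ∣ c * v i) : m ∣ c := by
  obtain ⟨a, b, hab⟩ := Int.isCoprime_iff_gcd_eq_one.mpr hv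
  have := dvd_add ((h 0).mul_left a) ((h 1).mul_left b)
  rwa [show a * (c * v 0) + b * (c * v 1) = c by linear_combination c * hab] at this

lemma dvd_one_sub_mul_of_mul_eq_colMat {P Q : Matrix (Fin 2) (Fin 2) ℤ} {x y m : ℤ}
    {v w : Fin 2 → ℤ} (hv : Primitive v) (hP : P * !![1, -x; 0, m] = colMat v w)
    (hQ : Q * !![1, -y; 0, m] = colMat w v) : m ∣ 1 - x * y :=
  hv.dvd_of_forall_dvd_mul_s9 fun i => by
    have hvi : v i ≡ -y * (-x * v i) [ZMOD m] :=
      (modEq_of_mul_eq_colMat hQ i).trans ((modEq_of_mul_eq_colMat hP i).mul_left (-y))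
    convert hvi.symm.dvd using 1
    ring

theorem hj_matrix_product_of_pair_general (v w : Fin 2 → ℤ) (hv : Primitive v)
    (hε2 : 2 ≤ |det2 v w|)
    (x y : ℤ) (hx0 : 0 ≤ x) (hy0 : 0 ≤ y) (hy1 : y < |det2 v w|)
    (hx : ∃ P : Matrix (Fin 2) (Fin 2) ℤ, Unimod P ∧
      P * !![1, -x; 0, |det2 v w|] = colMat v w)
    (hy : ∃ Q : Matrix (Fin 2) (Fin 2) ℤ, Unimod Q ∧
      Q * !![1, -y; 0, |det2 v w|] = colMat w v)
    (ns : List ℤ) (hns : ∀ n ∈ ns, 2 ≤ n)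
    (hhj : hjEval ns = ((|det2 v w| : ℤ) : ℚ) / (x : ℚ)) :
    ∃ k : ℤ, 1 - x * y = k * |det2 v w| ∧
      (ns.map fun n => !![0, -1; 1, n]).prod = !![k, -x; y, |det2 v w|] := by
  obtain ⟨P, -, hP⟩ := hx
  obtain ⟨Q, -, hQ⟩ := hy
  obtain ⟨c, hc⟩ := dvd_one_sub_mul_of_mul_eq_colMat hv hP hQ
  have hcop : IsCoprime x |det2 v w| := ⟨y, c, by linear_combination -hc⟩
  have hxpos : 0 < x := hx0.lt_of_ne <| by
    rintro rfl
    have := Int.isUnit_iff_abs_eq.mp (isCoprime_zero_left.mp hcop)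
    rw [abs_abs] at this
    omega
  obtain _ | ⟨n, ns⟩ := ns
  · exact absurd hhj.symm (div_ne_zero (by exact_mod_cast (by omega : |det2 v w| ≠ 0))
      (by exact_mod_cast hxpos.ne'))
  obtain ⟨k, x', y', m', hprod, hdet, hx', -, hy', hym', hval⟩ :=
    exists_prod_map_hjMat n ns hns
  have hcop' : IsCoprime m' x' := ⟨k, y', by linear_combination hdet⟩
  obtain ⟨rfl, rfl⟩ : m' = |det2 v w| ∧ x' = x :=
    Rat.div_int_inj hx' hxpos (Int.isCoprime_iff_gcd_eq_one.mp hcop')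
      (Int.isCoprime_iff_gcd_eq_one.mp hcop.symm) (hval.symm.trans hhj)
  obtain rfl : y' = y := by
    have hdvd : |det2 v w| ∣ y' - y :=
      ⟨c * y' - k * y, by linear_combination y' * hc + y * hdet⟩
    have hlt : |y' - y| < |det2 v w| := abs_sub_lt_iff.mpr ⟨by omega, by omega⟩
    exact sub_eq_zero.mp (Int.eq_zero_of_abs_lt_dvd hdvd hlt)
  exact ⟨k, by linear_combination -hdet, hprod⟩

/-- Lemma 4.1: with `x`, `y` the integers of Lemma 2.1 for `(v, w)` and `(w, v)` and
`n₁, …, n_l` the Hirzebruch–Jung expansion of `|ε|/x`, one has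
`[[0,-1],[1,n₁]] ⋯ [[0,-1],[1,n_l]] = [[(1-xy)/|ε|, -x],[y, |ε|]]`. -/
theorem hj_matrix_product_of_pair (v w : Fin 2 → ℤ) (hv : Primitive v) (hw : Primitive w)
    (hε : det2 v w ≠ 0) (hε2 : 2 ≤ |det2 v w|)
    (x y : ℤ) (hx0 : 0 ≤ x) (hx1 : x < |det2 v w|) (hy0 : 0 ≤ y) (hy1 : y < |det2 v w|)
    (hx : ∃ P : Matrix (Fin 2) (Fin 2) ℤ, Unimod P ∧
      P * !![1, -x; 0, |det2 v w|] = colMat v w)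
    (hy : ∃ Q : Matrix (Fin 2) (Fin 2) ℤ, Unimod Q ∧
      Q * !![1, -y; 0, |det2 v w|] = colMat w v)
    (ns : List ℤ) (hns : ∀ n ∈ ns, 2 ≤ n)
    (hhj : hjEval ns = ((|det2 v w| : ℤ) : ℚ) / (x : ℚ)) :
    ∃ k : ℤ, 1 - x * y = k * |det2 v w| ∧
      (ns.map fun n => !![0, -1; 1, n]).prod = !![k, -x; y, |det2 v w|] :=
  hj_matrix_product_of_pair_general v w hv hε2 x y hx0 hy0 hy1 hx hy ns hns hhj
end

section
/- Let v, w ∈ ℤ² be primitive vectors with ε = det(v, w) ≠ 0 and |ε| ≥ 2, let x be the unique non-negative integer less than |ε| such that P = (v, w)·[[1, −x],[0, |ε|]]^{−1} is a unimodular integer matrix, and let |ε|/x = n_1 − 1/(n_2 − 1/(⋯ − 1/n_l)), all n_j ≥ 2, be the Hirzebruch–Jung continued fraction expansion. Define w_j = P·[[0,−1],[1,n_1]]⋯[[0,−1],[1,n_j]]·(1,0)ᵀ for 0 ≤ j ≤ l and w_{l+1} = P·[[0,−1],[1,n_1]]⋯[[0,−1],[1,n_l]]·(0,1)ᵀ.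 Then for every j = 1, …, l, det(w_{j+1}, w_{j−1}) / (det(w_{j−1}, w_j) · det(w_j, w_{j+1})) = −n_j · ε/|ε|. -/
/-- The vectors `w_j` of (4.2): for `0 ≤ j ≤ l`,
`w_j = P·[[0,-1],[1,n₁]]⋯[[0,-1],[1,n_j]]·(1,0)ᵀ`, and for `j = l + 1`,
`w_{l+1} = P·[[0,-1],[1,n₁]]⋯[[0,-1],[1,n_l]]·(0,1)ᵀ`. -/
def chainVec (P : Matrix (Fin 2) (Fin 2) ℤ) (ns : List ℤ) (j : ℕ) : Fin 2 → ℤ :=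
  if j ≤ ns.length then
    (P * ((ns.take j).map fun n => !![0, -1; 1, n]).prod).mulVec ![1, 0]
  else
    (P * (ns.map fun n => !![0, -1; 1, n]).prod).mulVec ![0, 1]

lemma detProd (ns : List ℤ) :
    ((ns.map fun n => (!![0, -1; 1, n] : Matrix (Fin 2) (Fin 2) ℤ)).prod).det = 1 := by
  induction ns with
  | nil => simp
  | cons n t ih =>
      rw [List.map_cons, List.prod_cons, Matrix.det_mul, ih, Matrix.det_fin_two_of]; ring

lemma det2_mulVec (B : Matrix (Fin 2) (Fin 2) ℤ) (u w : Fin 2 → ℤ) :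
    det2 (B.mulVec u) (B.mulVec w) = B.det * det2 u w := by
  simp [det2, Matrix.mulVec, dotProduct, Matrix.det_fin_two, Fin.sum_univ_two]
  ring

lemma fmul10 (n : ℤ) : (!![0,-1;1,n] : Matrix (Fin 2) (Fin 2) ℤ).mulVec ![1,0] = ![0,1] := by
  funext i; fin_cases i <;> simp [Matrix.mulVec, dotProduct]

lemma fmul01 (n : ℤ) : (!![0,-1;1,n] : Matrix (Fin 2) (Fin 2) ℤ).mulVec ![0,1] = ![-1,n] := by
  funext i; fin_cases i <;> simp [Matrix.mulVec, dotProduct]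


/-- For an interior vector `w_j` (`1 ≤ j ≤ l`) of the chain from `v` to `w`,
`det(w_{j+1}, w_{j-1}) / (det(w_{j-1}, w_j)·det(w_j, w_{j+1})) = -n_j · ε/|ε|`. -/
theorem chain_interior_ratio (v w : Fin 2 → ℤ) (hv : Primitive v) (hw : Primitive w)
    (hε : det2 v w ≠ 0) (hε2 : 2 ≤ |det2 v w|)
    (x : ℤ) (hx0 : 0 ≤ x) (hx1 : x < |det2 v w|)
    (P : Matrix (Fin 2) (Fin 2) ℤ)
    (hP : Unimod P) (hPeq : P * !![1, -x; 0, |det2 v w|] = colMat v w)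
    (ns : List ℤ) (hns : ∀ n ∈ ns, 2 ≤ n)
    (hhj : hjEval ns = ((|det2 v w| : ℤ) : ℚ) / (x : ℚ)) :
    ∀ j : ℕ, 1 ≤ j → j ≤ ns.length →
      ((det2 (chainVec P ns (j + 1)) (chainVec P ns (j - 1)) : ℤ) : ℚ) /
          (((det2 (chainVec P ns (j - 1)) (chainVec P ns j) : ℤ) : ℚ) *
            ((det2 (chainVec P ns j) (chainVec P ns (j + 1)) : ℤ) : ℚ))
        = -((ns.getD (j - 1) 0 : ℤ) : ℚ) * ((det2 v w : ℚ) / ((|det2 v w| : ℤ) : ℚ)) := by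
  set ε := det2 v w with hεdef
  -- ε = P.det * |ε|
  have hεd : ε = P.det * |ε| := by
    have h1 : (P * !![1, -x; 0, |ε|]).det = (colMat v w).det := by rw [hPeq]
    rw [Matrix.det_mul, Matrix.det_fin_two_of] at h1
    have h2 : (colMat v w).det = ε := by
      rw [colMat, Matrix.det_fin_two_of, hεdef, det2]; ring
    rw [h2] at h1
    rw [show P.det * (1 * |ε| - -x * 0) = P.det * |ε| from by ring] at h1
    exact h1.symm
  intro j hj1 hj2
  obtain ⟨k, rfl⟩ : ∃ k, j = k + 1 := ⟨j - 1, (Nat.succ_pred_eq_of_pos hj1).symm⟩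
  have hk : k < ns.length := hj2
  simp only [Nat.add_sub_cancel]
  set f : ℤ → Matrix (Fin 2) (Fin 2) ℤ := fun n => !![0, -1; 1, n] with hf
  set Q : Matrix (Fin 2) (Fin 2) ℤ := P * ((ns.take k).map f).prod with hQ
  set n : ℤ := ns.getD k 0 with hn
  have htake : ((ns.take (k+1)).map f).prod = ((ns.take k).map f).prod * f n := by
    rw [List.take_succ]
    have : ns[k]? = some (ns.getD k 0) := by
      rw [List.getElem?_eq_getElem hk, List.getD_eq_getElem ns 0 hk]
    rw [this, Option.toList_some, List.map_append, List.prod_append,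
      List.map_singleton, List.prod_singleton, hn]
  have hQdet : Q.det = P.det := by
    rw [hQ, Matrix.det_mul, detProd, mul_one]
  have e0 : chainVec P ns k = Q.mulVec ![1, 0] := by
    rw [chainVec, if_pos (le_of_lt hk)]
  have e1 : chainVec P ns (k+1) = Q.mulVec ![0, 1] := by
    rw [chainVec, if_pos hj2, htake, ← mul_assoc, ← hQ, ← Matrix.mulVec_mulVec, fmul10]
  have e2 : chainVec P ns (k+1+1) = Q.mulVec ![-1, n] := by
    rw [chainVec]
    by_cases hc : k + 1 + 1 ≤ ns.length
    · rw [if_pos hc]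
      have htake2 : ((ns.take (k+2)).map f).prod
          = ((ns.take (k+1)).map f).prod * f (ns.getD (k+1) 0) := by
        rw [List.take_succ]
        have hk1 : k + 1 < ns.length := hc
        have : ns[k+1]? = some (ns.getD (k+1) 0) := by
          rw [List.getElem?_eq_getElem hk1, List.getD_eq_getElem ns 0 hk1]
        rw [this, Option.toList_some, List.map_append, List.prod_append,
          List.map_singleton, List.prod_singleton]
      rw [htake2, htake, ← mul_assoc, ← mul_assoc, ← hQ, ← Matrix.mulVec_mulVec,
        ← Matrix.mulVec_mulVec, fmul10, fmul01]
    · rw [if_neg hc]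
      have hlen : ns.length = k + 1 := by omega
      have : ns.take (k+1) = ns := by rw [← hlen, List.take_length]
      rw [← this, htake, ← mul_assoc, ← hQ, ← Matrix.mulVec_mulVec, fmul01]
  rw [e0, e1, e2, det2_mulVec, det2_mulVec, det2_mulVec, hQdet]
  have d1 : det2 ![1, 0] ![0, 1] = 1 := by
    simp [det2, Matrix.cons_val_zero, Matrix.cons_val_one, Matrix.head_cons]
  have d2 : det2 ![0, 1] ![(-1 : ℤ), n] = 1 := by
    simp [det2, Matrix.cons_val_zero, Matrix.cons_val_one, Matrix.head_cons]
  have d3 : det2 ![(-1 : ℤ), n] ![1, 0] = -n := by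
    simp [det2, Matrix.cons_val_zero, Matrix.cons_val_one, Matrix.head_cons]
  rw [d1, d2, d3]
  have hεQ : ((ε : ℤ) : ℚ) ≠ 0 := by exact_mod_cast hε
  rcases hP with hd | hd <;> rw [hd] <;> rw [hd] at hεd
  · have habs : (|ε| : ℤ) = ε := by linarith
    rw [habs]; push_cast; field_simp
  · have habs : (|ε| : ℤ) = -ε := by linarith
    rw [habs]; push_cast; field_simp
end

section
/- Let u, v, w ∈ ℤ² be primitive vectors with δ = det(u, v) ≠ 0 and ε = det(v, w) ≠ 0, and set a = δ^{−1}ε^{−1}·det(w, u). Let x (resp. y') be the unique non-negative integer less than |ε| (resp. |δ|) such that (v, w)·[[1, −x],[0, |ε|]]^{−1} (resp. (v, u)·[[1, −y'],[0, |δ|]]^{−1}) is a unimodular integer matrix. Let w' be the last interior vector of the unimodular chain from u to v (i.e. w' = P'·[[0,−1],[1,n'_1]]⋯[[0,−1],[1,n'_{l'}]]·(1,0)ᵀ, where P' is the unimodular matrix of Lemma 2.1 for the pair (u, v) and n'_1, …, n'_{l'} is the Hirzebruch–Jung expansion of |δ|/x'; w' = u when |δ| = 1), and let w'' be the first interior vector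 of the unimodular chain from v to w (i.e. w'' = P·[[0,−1],[1,n_1]]·(1,0)ᵀ where n_1, …, n_l is the Hirzebruch–Jung expansion of |ε|/x; w'' = w when |ε| = 1). Then det(w'', w') / (det(w', v) · det(v, w'')) = a − x/ε − y'/δ. -/
/-!
Write `δ = det(u, v)` and `ε = det(v, w)`. From `P·[[1, -x], [0, |ε|]] = (v, w)` the first
interior vector `w''` of the chain from `v` to `w` is the second column of `P`, so
`|ε|·w'' = w + x·v`. Multiplying out the Hirzebruch–Jung matrices shows that the last interior
vector `w'` of the chain from `u` to `v` satisfies `|δ|·w' = u + c·v` with `0 ≤ c < |δ|`; as `v`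
is primitive this pins `c` down as the integer `y'` of Lemma 2.1 for `(v, u)`. The claimed
identity is then bilinear algebra in the two relations `|ε|·w'' = w + x·v`, `|δ|·w' = u + y'·v`.
-/

section MulEqColMat

variable {P : Matrix (Fin 2) (Fin 2) ℤ} {v w : Fin 2 → ℤ} {x m : ℤ}

lemma apply_zero_of_mul_eq_colMat (h : P * !![1, -x; 0, m] = colMat v w) (i : Fin 2) :
    P i 0 = v i := by
  have := congrFun (congrFun h i) 0
  fin_cases i <;> simpa [Matrix.mul_apply, Fin.sum_univ_two, colMat] using this

lemma mul_apply_one_of_mul_eq_colMat (h : P * !![1, -x; 0, m] = colMat v w) (i : Fin 2) :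
    m * P i 1 = w i + x * v i := by
  have := congrFun (congrFun h i) 1
  rw [← apply_zero_of_mul_eq_colMat h i]
  fin_cases i <;> simp [Matrix.mul_apply, Fin.sum_univ_two, colMat] at this ⊢ <;> linarith

lemma isCoprime_of_mul_eq_colMat (h : P * !![1, -x; 0, m] = colMat v w)
    (hw : IsCoprime (w 0) (w 1)) : IsCoprime x m := by
  obtain ⟨s, t, hst⟩ := hw
  refine ⟨-(s * P 0 0 + t * P 1 0), s * P 0 1 + t * P 1 1, ?_⟩
  linear_combination hst + s * mul_apply_one_of_mul_eq_colMat h 0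
    + t * mul_apply_one_of_mul_eq_colMat h 1
    - s * x * apply_zero_of_mul_eq_colMat h 0 - t * x * apply_zero_of_mul_eq_colMat h 1

end MulEqColMat

lemma chainVec_one_apply (P : Matrix (Fin 2) (Fin 2) ℤ) (ns : List ℤ) (i : Fin 2) :
    chainVec P ns 1 i = P i 1 := by
  cases ns with
  | nil => simp [chainVec, Matrix.mulVec, dotProduct, Fin.sum_univ_two]
  | cons n t => simp [chainVec, Matrix.mulVec, Matrix.mul_apply, dotProduct, Fin.sum_univ_two]

/-- The inequalities are the invariant that makes the induction go through; for `ns = []` the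
product is `1`, with `b = 0` and the junk value `hjEval [] = 0 = d / 0`. -/
lemma exists_prod_eq_of_two_le (ns : List ℤ) (hns : ∀ n ∈ ns, 2 ≤ n) :
    ∃ a b c d : ℤ, (ns.map fun n => !![0, -1; 1, n]).prod = !![-a, -b; c, d] ∧
      a ≤ c ∧ 0 ≤ b ∧ 0 ≤ c ∧ c < d ∧ b - a ≤ d - c ∧ b * c - a * d = 1 ∧
      hjEval ns = d / b := by
  induction ns with
  | nil => exact ⟨-1, 0, 0, 1, by simp [Matrix.one_fin_two], by norm_num [hjEval]⟩
  | cons n t ih =>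
    have hn : 2 ≤ n := hns n List.mem_cons_self
    obtain ⟨a, b, c, d, hprod, hac, hb, hc, hcd, hba, hdet, hval⟩ :=
      ih fun k hk => hns k (List.mem_cons_of_mem n hk)
    refine ⟨c, d, n * c - a, n * d - b, ?_, by nlinarith, by omega, by nlinarith,
      by nlinarith, by nlinarith, by linear_combination hdet, ?_⟩
    · rw [List.map_cons, List.prod_cons, hprod, Matrix.mul_fin_two]
      ring_nf
    · have hd : (d : ℚ) ≠ 0 := by exact_mod_cast (by omega : d ≠ 0)
      rw [hjEval, hval, one_div_div]
      push_cast
      field_simp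

lemma eq_and_eq_of_div_eq_div {a b c d : ℤ} (ha : 0 < a) (hb : 0 ≤ b) (hc : 0 < c)
    (hd : 0 ≤ d) (hab : IsCoprime a b) (hcd : IsCoprime c d) (h : (a : ℚ) / b = c / d) :
    a = c ∧ b = d := by
  have hcQ : (c : ℚ) ≠ 0 := by exact_mod_cast hc.ne'
  have haQ : (a : ℚ) ≠ 0 := by exact_mod_cast ha.ne'
  rcases hb.eq_or_lt with rfl | hb
  · obtain rfl : d = 0 := by simpa [hcQ] using h.symm
    rw [isCoprime_zero_right, Int.isUnit_iff] at hab hcd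
    omega
  · have hd : 0 < d := by
      refine hd.lt_of_ne fun hd0 => ?_
      subst hd0
      simp_all [div_eq_zero_iff]
    exact Rat.div_int_inj hb hd (Int.isCoprime_iff_gcd_eq_one.1 hab)
      (Int.isCoprime_iff_gcd_eq_one.1 hcd) h

lemma exists_mul_chainVec_length_eq {P : Matrix (Fin 2) (Fin 2) ℤ} {u v : Fin 2 → ℤ}
    {x m : ℤ} {ns : List ℤ} (hP : P * !![1, -x; 0, m] = colMat u v)
    (hv : IsCoprime (v 0) (v 1)) (hx : 0 ≤ x) (hm : 0 < m) (hns : ∀ n ∈ ns, 2 ≤ n)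
    (hval : hjEval ns = m / x) :
    ∃ c, 0 ≤ c ∧ c < m ∧ ∀ i, m * chainVec P ns ns.length i = u i + c * v i := by
  obtain ⟨a, b, c, d, hprod, -, hb, hc, hcd, -, hdet, hval'⟩ := exists_prod_eq_of_two_le ns hns
  obtain ⟨rfl, rfl⟩ := eq_and_eq_of_div_eq_div (by omega) hb hm hx
    ⟨-a, c, by linear_combination hdet⟩ (isCoprime_of_mul_eq_colMat hP hv).symm
    (hval'.symm.trans hval)
  refine ⟨c, hc, hcd, fun i => ?_⟩
  have hchain : chainVec P ns ns.length i = -a * P i 0 + c * P i 1 := by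
    simp only [chainVec, le_refl, ↓reduceIte, List.take_length, hprod, Matrix.mulVec,
      dotProduct, Fin.sum_univ_two, Matrix.mul_apply, Matrix.of_apply, Matrix.cons_val',
      Matrix.cons_val_zero, Matrix.cons_val_one, Matrix.cons_val_fin_one]
    ring
  rw [hchain]
  linear_combination c * mul_apply_one_of_mul_eq_colMat hP i
    - a * d * apply_zero_of_mul_eq_colMat hP i + u i * hdet

lemma eq_of_mul_eq_add_mul {m β γ : ℤ} {u v p q : Fin 2 → ℤ} (hv : IsCoprime (v 0) (v 1))
    (hp : ∀ i, m * p i = u i + β * v i) (hq : ∀ i, m * q i = u i + γ * v i)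
    (hβ : 0 ≤ β) (hβm : β < m) (hγ : 0 ≤ γ) (hγm : γ < m) : β = γ := by
  obtain ⟨s, t, hst⟩ := hv
  have hdvd : m ∣ β - γ := ⟨s * (p 0 - q 0) + t * (p 1 - q 1), by
    linear_combination -(β - γ) * hst - s * (hp 0 - hq 0) - t * (hp 1 - hq 1)⟩
  have := Int.eq_zero_of_abs_lt_dvd hdvd (abs_sub_lt_iff.2 ⟨by omega, by omega⟩)
  omega

lemma det2_div_det2_mul_det2_eq {u v w p q : Fin 2 → ℤ} {x y D E : ℤ} (hδ : det2 u v ≠ 0)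
    (hε : det2 v w ≠ 0) (hp : ∀ i, D * p i = u i + y * v i)
    (hq : ∀ i, E * q i = w i + x * v i) :
    (det2 q p : ℚ) / ((det2 p v : ℚ) * det2 v q)
      = (det2 u v : ℚ)⁻¹ * (det2 v w : ℚ)⁻¹ * det2 w u - x / det2 v w - y / det2 u v := by
  have hpv : D * det2 p v = det2 u v := by
    simp only [det2]; linear_combination v 1 * hp 0 - v 0 * hp 1
  have hvq : E * det2 v q = det2 v w := by
    simp only [det2]; linear_combination v 0 * hq 1 - v 1 * hq 0
  have hqp : E * D * det2 q p = det2 w u - y * det2 v w - x * det2 u v := by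
    simp only [det2]
    linear_combination D * p 1 * hq 0 + (w 0 + x * v 0) * hp 1 - D * p 0 * hq 1
      - (w 1 + x * v 1) * hp 0
  qify at hpv hvq hqp hδ hε
  rw [← hpv] at hqp hδ ⊢
  rw [← hvq] at hqp hε ⊢
  obtain ⟨hD, hpv0⟩ := mul_ne_zero_iff.1 hδ
  obtain ⟨hE, hvq0⟩ := mul_ne_zero_iff.1 hε
  field_simp
  linear_combination hqp

theorem chain_corner_ratio_general (u v w : Fin 2 → ℤ)
    (hv : Primitive v)
    (hδ : det2 u v ≠ 0) (hε : det2 v w ≠ 0)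
    (a : ℚ) (ha : a = (det2 u v : ℚ)⁻¹ * (det2 v w : ℚ)⁻¹ * (det2 w u : ℚ))
    -- `x'`, `P'`, `ns'` : the data of Lemma 2.1 and the Hirzebruch–Jung expansion
    -- for the pair `(u, v)`
    (x' : ℤ) (hx'0 : 0 ≤ x') (hx'1 : x' < |det2 u v|)
    (P' : Matrix (Fin 2) (Fin 2) ℤ)
    (hP'eq : P' * !![1, -x'; 0, |det2 u v|] = colMat u v)
    (ns' : List ℤ)
    (hns'1 : |det2 u v| = 1 → ns' = [])
    (hns'2 : 2 ≤ |det2 u v| → (∀ n ∈ ns', 2 ≤ n) ∧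
      hjEval ns' = ((|det2 u v| : ℤ) : ℚ) / (x' : ℚ))
    -- `x`, `P`, `ns` : the data of Lemma 2.1 and the Hirzebruch–Jung expansion
    -- for the pair `(v, w)`
    (x : ℤ)
    (P : Matrix (Fin 2) (Fin 2) ℤ)
    (hPeq : P * !![1, -x; 0, |det2 v w|] = colMat v w)
    (ns : List ℤ)
    -- `y'` : the integer of Lemma 2.1 for the pair `(v, u)`
    (y' : ℤ) (hy'0 : 0 ≤ y') (hy'1 : y' < |det2 u v|)
    (hy' : ∃ Q : Matrix (Fin 2) (Fin 2) ℤ, Unimod Q ∧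
      Q * !![1, -y'; 0, |det2 u v|] = colMat v u) :
    ((det2 (chainVec P ns 1) (chainVec P' ns' ns'.length) : ℤ) : ℚ) /
        (((det2 (chainVec P' ns' ns'.length) v : ℤ) : ℚ) *
          ((det2 v (chainVec P ns 1) : ℤ) : ℚ))
      = a - (x : ℚ) / (det2 v w : ℚ) - (y' : ℚ) / (det2 u v : ℚ) := by
  have hv' : IsCoprime (v 0) (v 1) := Int.isCoprime_iff_gcd_eq_one.2 hv
  have hD : 0 < |det2 u v| := abs_pos.2 hδ
  have hns' : (∀ n ∈ ns', 2 ≤ n) ∧ hjEval ns' = ((|det2 u v| : ℤ) : ℚ) / (x' : ℚ) := by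
    rcases (show |det2 u v| = 1 ∨ 2 ≤ |det2 u v| by omega) with hD1 | hD2
    · obtain rfl : x' = 0 := by omega
      simp [hns'1 hD1, hjEval]
    · exact hns'2 hD2
  obtain ⟨c, hc0, hcD, hw'⟩ :=
    exists_mul_chainVec_length_eq hP'eq hv' hx'0 hD hns'.1 hns'.2
  obtain ⟨Q, -, hQ⟩ := hy'
  obtain rfl : y' = c :=
    eq_of_mul_eq_add_mul hv' (mul_apply_one_of_mul_eq_colMat hQ) hw' hy'0 hy'1 hc0 hcD
  rw [ha]
  refine det2_div_det2_mul_det2_eq (E := |det2 v w|) hδ hε hw' fun i => ?_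
  rw [chainVec_one_apply]
  exact mul_apply_one_of_mul_eq_colMat hPeq i

/-- Let `w' = chainVec P' ns' ns'.length` be the last interior vector of the unimodular
chain from `u` to `v` and `w'' = chainVec P ns 1` the first interior vector of the
unimodular chain from `v` to `w`.  Then
`det(w'', w') / (det(w', v)·det(v, w'')) = a - x/ε - y'/δ`. -/
theorem chain_corner_ratio (u v w : Fin 2 → ℤ)
    (hu : Primitive u) (hv : Primitive v) (hw : Primitive w)
    (hδ : det2 u v ≠ 0) (hε : det2 v w ≠ 0)
    (a : ℚ) (ha : a = (det2 u v : ℚ)⁻¹ * (det2 v w : ℚ)⁻¹ * (det2 w u : ℚ))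
    -- `x'`, `P'`, `ns'` : the data of Lemma 2.1 and the Hirzebruch–Jung expansion
    -- for the pair `(u, v)`
    (x' : ℤ) (hx'0 : 0 ≤ x') (hx'1 : x' < |det2 u v|)
    (P' : Matrix (Fin 2) (Fin 2) ℤ)
    (hP' : Unimod P') (hP'eq : P' * !![1, -x'; 0, |det2 u v|] = colMat u v)
    (ns' : List ℤ)
    (hns'1 : |det2 u v| = 1 → ns' = [])
    (hns'2 : 2 ≤ |det2 u v| → (∀ n ∈ ns', 2 ≤ n) ∧
      hjEval ns' = ((|det2 u v| : ℤ) : ℚ) / (x' : ℚ))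
    -- `x`, `P`, `ns` : the data of Lemma 2.1 and the Hirzebruch–Jung expansion
    -- for the pair `(v, w)`
    (x : ℤ) (hx0 : 0 ≤ x) (hx1 : x < |det2 v w|)
    (P : Matrix (Fin 2) (Fin 2) ℤ)
    (hP : Unimod P) (hPeq : P * !![1, -x; 0, |det2 v w|] = colMat v w)
    (ns : List ℤ)
    (hns1 : |det2 v w| = 1 → ns = [])
    (hns2 : 2 ≤ |det2 v w| → (∀ n ∈ ns, 2 ≤ n) ∧
      hjEval ns = ((|det2 v w| : ℤ) : ℚ) / (x : ℚ))
    -- `y'` : the integer of Lemma 2.1 for the pair `(v, u)`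
    (y' : ℤ) (hy'0 : 0 ≤ y') (hy'1 : y' < |det2 u v|)
    (hy' : ∃ Q : Matrix (Fin 2) (Fin 2) ℤ, Unimod Q ∧
      Q * !![1, -y'; 0, |det2 u v|] = colMat v u) :
    ((det2 (chainVec P ns 1) (chainVec P' ns' ns'.length) : ℤ) : ℚ) /
        (((det2 (chainVec P' ns' ns'.length) v : ℤ) : ℚ) *
          ((det2 v (chainVec P ns 1) : ℤ) : ℚ))
      = a - (x : ℚ) / (det2 v w : ℚ) - (y' : ℚ) / (det2 u v : ℚ) :=
  chain_corner_ratio_general u v w hv hδ hε a ha x' hx'0 hx'1 P' hP'eq ns' hns'1 hns'2 x P hPeq ns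
    y' hy'0 hy'1 hy'
end
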